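/- arXiv:1207.1951 — 3 statements merged into one kernel-verified Lean document; each statement's English description precedes it below -/
import Mathlib

section
/- Let A be an abelian p-group, and let a, b ∈ A generate cyclic subgroups with ⟨a⟩ ∩ ⟨b⟩ = 0. If for integers k, l the equality of subgroups ⟨a⟩ + ⟨k·a + l·b⟩ = ⟨a⟩ + ⟨b⟩ holds, then ⟨l·b⟩ = ⟨b⟩. -/
theorem stmt_6 {A : Type*} [AddCommGroup A] (p : ℕ) (hp : p.Prime) (a b : A)
    (ha : ∃ m : ℕ, addOrderOf a = p ^ m) (hb : ∃ m : ℕ, addOrderOf b = p ^ m)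
    (hdisj : AddSubgroup.zmultiples a ⊓ AddSubgroup.zmultiples b = ⊥)
    (k l : ℤ)
    (h : AddSubgroup.zmultiples a ⊔ AddSubgroup.zmultiples (k • a + l • b)
        = AddSubgroup.zmultiples a ⊔ AddSubgroup.zmultiples b) :
    AddSubgroup.zmultiples (l • b) = AddSubgroup.zmultiples b := by
  have hbmem : b ∈ AddSubgroup.zmultiples a ⊔ AddSubgroup.zmultiples (k • a + l • b) := by
    rw [h]
    exact AddSubgroup.mem_sup_right (AddSubgroup.mem_zmultiples b)
  rw [AddSubgroup.mem_sup] at hbmem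
  obtain ⟨x, hx, y, hy, hxy⟩ := hbmem
  obtain ⟨s, hs⟩ := AddSubgroup.mem_zmultiples_iff.mp hx
  obtain ⟨t, ht⟩ := AddSubgroup.mem_zmultiples_iff.mp hy
  -- b = s•a + t•(k•a + l•b) = (s + t*k)•a + (t*l)•b
  have key : b - (t * l) • b = (s + t * k) • a := by
    have : s • a + t • (k • a + l • b) = b := by rw [hs, ht]; exact hxy
    rw [smul_add, smul_smul, smul_smul] at this
    have key2 := congrArg (fun z => z - (t * l) • b) this
    rw [← key2, add_smul]
    abel
  have hz : b - (t * l) • b = 0 := by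
    have h1 : b - (t * l) • b ∈ AddSubgroup.zmultiples a := by
      rw [key]; exact AddSubgroup.mem_zmultiples_iff.mpr ⟨s + t * k, rfl⟩
    have h2 : b - (t * l) • b ∈ AddSubgroup.zmultiples b := by
      have : b - (t * l) • b = (1 - t * l) • b := by
        rw [sub_smul, one_smul]
      rw [this]
      exact AddSubgroup.mem_zmultiples_iff.mpr ⟨1 - t * l, rfl⟩
    have := hdisj ▸ (AddSubgroup.mem_inf.mpr ⟨h1, h2⟩)
    simpa using this
  have hb' : b = t • (l • b) := by
    rw [smul_smul]
    exact sub_eq_zero.mp hz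
  apply le_antisymm
  · exact (AddSubgroup.zmultiples_le).mpr (AddSubgroup.mem_zmultiples_iff.mpr ⟨l, rfl⟩)
  · exact (AddSubgroup.zmultiples_le).mpr (AddSubgroup.mem_zmultiples_iff.mpr ⟨t, hb'.symm⟩)
end

section
/- With the setup of the previous computation (g(b₁) = k₁b₁ + k₂b₂ with k₂·b₂ ≠ 0, g₀(b₃) = l₁b₃ + l₂b₁ with l₂·b₁ ≠ 0 and l₂(k₁−1)·b₁ well-defined), the image (g₀⁻¹ g g₀)(⟨b₃⟩) is contained in ⟨b₃⟩ ⊕ ⟨b₂⟩ if and only if (k₁ − 1)·b₁ is annihilated by l₂, i.e. l₂(k₁−1)·b₁ = 0. -/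
/-! Conjugating by `g₀` sends `b₃` to `b₃ + (l₂ k₂)·b₂ + (l₂ (k₁ - 1))·b₁`. An additive map sends
`⟨b₃⟩` into `⟨b₃⟩ ⊕ ⟨b₂⟩` iff it sends `b₃` there, and by the independence of `b₁` from `b₂, b₃`
this happens iff the `b₁`-component `(l₂ (k₁ - 1))·b₁` vanishes. -/

theorem AddSubgroup.add_mem_iff_eq_zero_of_inf_eq_bot {G : Type*} [AddGroup G]
    {A H : AddSubgroup G} (hAH : A ⊓ H = ⊥) {h a : G} (hh : h ∈ H) (ha : a ∈ A) :
    h + a ∈ H ↔ a = 0 := by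
  rw [H.add_mem_cancel_left hh]
  refine ⟨fun haH => ?_, fun ha0 => ha0 ▸ H.zero_mem⟩
  have : a ∈ A ⊓ H := ⟨ha, haH⟩
  rwa [hAH, AddSubgroup.mem_bot] at this

theorem AddSubgroup.forall_mem_zmultiples_map_mem_iff {F G H : Type*} [AddGroup G] [AddGroup H]
    [FunLike F G H] [AddMonoidHomClass F G H] (f : F) (a : G) (K : AddSubgroup H) :
    (∀ x ∈ zmultiples a, f x ∈ K) ↔ f a ∈ K :=
  zmultiples_le (H := K.comap (f : G →+ H))

theorem conj_apply_of_shears {B : Type*} [AddCommGroup B] {b₁ b₂ b₃ : B} {k₁ k₂ l₁ l₂ : ℤ}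
    {g g₀ : B ≃+ B} (hg1 : g b₁ = k₁ • b₁ + k₂ • b₂) (hg3 : g b₃ = b₃)
    (hg01 : g₀ b₁ = b₁) (hg02 : g₀ b₂ = b₂) (hg03 : g₀ b₃ = l₁ • b₃ + l₂ • b₁) :
    g₀.symm (g (g₀ b₃)) = b₃ + (l₂ * k₂) • b₂ + (l₂ * (k₁ - 1)) • b₁ := by
  rw [AddEquiv.symm_apply_eq]
  simp only [map_add, map_zsmul, hg1, hg3, hg01, hg02, hg03, smul_add, smul_smul]
  module

theorem stmt_9_general {B : Type*} [AddCommGroup B] (b₁ b₂ b₃ : B) (k₁ k₂ l₁ l₂ : ℤ)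
    (hindep : AddSubgroup.zmultiples b₁ ⊓
        (AddSubgroup.zmultiples b₂ ⊔ AddSubgroup.zmultiples b₃) = ⊥)
    (g g₀ : B ≃+ B)
    (hg1 : g b₁ = k₁ • b₁ + k₂ • b₂) (hg3 : g b₃ = b₃)
    (hg01 : g₀ b₁ = b₁) (hg02 : g₀ b₂ = b₂) (hg03 : g₀ b₃ = l₁ • b₃ + l₂ • b₁) :
    (∀ x ∈ AddSubgroup.zmultiples b₃,
        g₀.symm (g (g₀ x)) ∈ AddSubgroup.zmultiples b₃ ⊔ AddSubgroup.zmultiples b₂)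
      ↔ (l₂ * (k₁ - 1)) • b₁ = 0 := by
  refine (AddSubgroup.forall_mem_zmultiples_map_mem_iff (g₀.trans (g.trans g₀.symm)) b₃ _).trans ?_
  rw [AddEquiv.trans_apply, AddEquiv.trans_apply, conj_apply_of_shears hg1 hg3 hg01 hg02 hg03]
  rw [sup_comm] at hindep
  exact AddSubgroup.add_mem_iff_eq_zero_of_inf_eq_bot hindep
    (add_mem (AddSubgroup.mem_sup_left (AddSubgroup.mem_zmultiples b₃))
      (AddSubgroup.mem_sup_right (AddSubgroup.zsmul_mem _ (AddSubgroup.mem_zmultiples b₂) _)))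
    (AddSubgroup.zsmul_mem _ (AddSubgroup.mem_zmultiples b₁) _)

theorem stmt_9 {B : Type*} [AddCommGroup B] (b₁ b₂ b₃ : B) (k₁ k₂ l₁ l₂ : ℤ)
    (hindep : AddSubgroup.zmultiples b₁ ⊓
        (AddSubgroup.zmultiples b₂ ⊔ AddSubgroup.zmultiples b₃) = ⊥)
    (g g₀ : B ≃+ B)
    (hg1 : g b₁ = k₁ • b₁ + k₂ • b₂) (hg2 : g b₂ = b₂) (hg3 : g b₃ = b₃)
    (hg01 : g₀ b₁ = b₁) (hg02 : g₀ b₂ = b₂) (hg03 : g₀ b₃ = l₁ • b₃ + l₂ • b₁) :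
    (∀ x ∈ AddSubgroup.zmultiples b₃,
        g₀.symm (g (g₀ x)) ∈ AddSubgroup.zmultiples b₃ ⊔ AddSubgroup.zmultiples b₂)
      ↔ (l₂ * (k₁ - 1)) • b₁ = 0 :=
  stmt_9_general b₁ b₂ b₃ k₁ k₂ l₁ l₂ hindep g g₀ hg1 hg3 hg01 hg02 hg03
end

section
/- Let A be an abelian group that is the internal direct sum of a family of cyclic subgroups ⟨bᵢ⟩ (i ∈ I). Fix i₀ ∈ I and an element a ∈ A lying in the sum of the other summands with addOrderOf a ∣ addOrderOf b_{i₀}. Then there is a unique automorphism f of A with f(b_{i₀}) = b_{i₀} + a and f(bⱼ) = bⱼ for all j ≠ i₀. -/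
/-!
Write `A = ⟨b i₀⟩ ⊕ Q`, where `Q` is the sum of the other summands. Since the order of `a` divides
that of `b i₀`, the assignment `n • b i₀ ↦ n • a` is a well-defined homomorphism on `⟨b i₀⟩`;
extending it by zero on `Q` gives an endomorphism `ψ` with values in `Q` (as `a ∈ Q`), so `ψ² = 0`
and `1 + ψ` is an automorphism with the required values. It is unique because the `b i` generate `A`.
-/

open Submodule Ideal

namespace Submodule

variable {R M : Type*} [Ring R] [AddCommGroup M] [Module R M]

/-- The map `r • x ↦ r • a` on `R ∙ x`. -/
noncomputable def spanSingletonLift (x a : M) (h : torsionOf R M x ≤ torsionOf R M a) :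
    (R ∙ x) →ₗ[R] M :=
  ((torsionOf R M x).liftQ (LinearMap.toSpanSingleton R M a) h).comp
    (quotTorsionOfEquivSpanSingleton R M x).symm.toLinearMap

theorem spanSingletonLift_apply_self (x a : M) (h : torsionOf R M x ≤ torsionOf R M a) :
    spanSingletonLift x a h ⟨x, mem_span_singleton_self x⟩ = a := by
  have : (quotTorsionOfEquivSpanSingleton R M x).symm ⟨x, mem_span_singleton_self x⟩ =
      Submodule.Quotient.mk 1 :=
    (LinearEquiv.symm_apply_eq _).2 (by simp)
  rw [spanSingletonLift, LinearMap.comp_apply, LinearEquiv.coe_coe, this]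
  exact one_smul R a

theorem range_spanSingletonLift (x a : M) (h : torsionOf R M x ≤ torsionOf R M a) :
    LinearMap.range (spanSingletonLift x a h) = R ∙ a := by
  rw [spanSingletonLift, LinearMap.range_comp_of_range_eq_top _ (LinearEquiv.range _)]
  exact (range_liftQ _ _ _).trans (LinearMap.span_singleton_eq_range R M a).symm

end Submodule

section Transvection

variable {R M : Type*} [Ring R] [AddCommGroup M] [Module R M]

theorem LinearMap.exists_linearEquiv_eq_add_of_isCompl {p q : Submodule R M} (hpq : IsCompl p q)
    (φ : p →ₗ[R] M) (hφ : range φ ≤ q) :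
    ∃ f : M ≃ₗ[R] M, (∀ y : p, f y = y + φ y) ∧ ∀ z ∈ q, f z = z := by
  set ψ := ofIsCompl hpq φ 0
  have hψq : ∀ z ∈ q, ψ z = 0 := fun z hz => by
    simpa using ofIsCompl_apply_right hpq (φ := φ) (ψ := 0) ⟨z, hz⟩
  have hψ : IsNilpotent ψ := ⟨2, by
    ext y
    rw [pow_two, Module.End.mul_apply, zero_apply]
    exact hψq _ (hφ ⟨p.projectionOnto q hpq y, by simp [ψ, ofIsCompl_eq_add]⟩)⟩
  refine ⟨GeneralLinearGroup.generalLinearEquiv R M hψ.isUnit_one_add.unit, fun y => ?_,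
    fun z hz => ?_⟩
  · simp [ψ]
  · simp [hψq z hz]

theorem exists_linearEquiv_apply_eq_add_of_isCompl {x a : M} {q : Submodule R M}
    (hxq : IsCompl (R ∙ x) q) (ha : a ∈ q) (htors : torsionOf R M x ≤ torsionOf R M a) :
    ∃ f : M ≃ₗ[R] M, f x = x + a ∧ ∀ z ∈ q, f z = z := by
  have hrange : LinearMap.range (spanSingletonLift x a htors) ≤ q :=
    (range_spanSingletonLift x a htors).le.trans ((span_singleton_le_iff_mem a q).2 ha)
  obtain ⟨f, hfx, hfq⟩ := LinearMap.exists_linearEquiv_eq_add_of_isCompl hxq _ hrange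
  exact ⟨f, by simpa [spanSingletonLift_apply_self] using hfx ⟨x, mem_span_singleton_self x⟩, hfq⟩

end Transvection

theorem torsionOf_le_torsionOf_of_addOrderOf_dvd {A : Type*} [AddCommGroup A] {x a : A}
    (h : addOrderOf a ∣ addOrderOf x) : torsionOf ℤ A x ≤ torsionOf ℤ A a := fun n hn => by
  rw [mem_torsionOf_iff] at hn ⊢
  exact addOrderOf_dvd_iff_zsmul_eq_zero.mp
    ((Int.natCast_dvd_natCast.2 h).trans (addOrderOf_dvd_iff_zsmul_eq_zero.2 hn))

theorem AddSubgroup.toIntSubmodule_zmultiples {A : Type*} [AddCommGroup A] (x : A) :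
    (AddSubgroup.zmultiples x).toIntSubmodule = ℤ ∙ x := by
  ext y
  exact AddSubgroup.mem_zmultiples_iff.trans (mem_span_singleton (R := ℤ)).symm

theorem iSupIndep.isCompl_biSup_compl {α ι : Type*} [CompleteLattice α] {f : ι → α}
    (hf : iSupIndep f) (htop : ⨆ i, f i = ⊤) (i : ι) :
    IsCompl (f i) (⨆ j ∈ ({i}ᶜ : Set ι), f j) :=
  ⟨hf i, codisjoint_iff.2 ((iSup_split_single f i).symm.trans htop)⟩

theorem AddMonoidHom.ext_of_iSup_zmultiples_eq_top {A B ι : Type*} [AddGroup A] [AddMonoid B]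
    {b : ι → A} (hgen : ⨆ i, AddSubgroup.zmultiples (b i) = ⊤) {f g : A →+ B}
    (h : ∀ i, f (b i) = g (b i)) : f = g := by
  have hle : ⊤ ≤ f.eqLocus g :=
    hgen ▸ iSup_le fun i => AddSubgroup.zmultiples_le_of_mem (h i)
  exact ext fun x => hle (AddSubgroup.mem_top x)

theorem stmt_18_general {A : Type*} [AddCommGroup A] {I : Type*} (b : I → A)
    (hgen : (⨆ i, AddSubgroup.zmultiples (b i)) = (⊤ : AddSubgroup A))
    (hindep : iSupIndep fun i => AddSubgroup.zmultiples (b i))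
    (i₀ : I) (a : A)
    (ha : a ∈ ⨆ j ∈ ({i₀}ᶜ : Set I), AddSubgroup.zmultiples (b j))
    (hdvd : addOrderOf a ∣ addOrderOf (b i₀)) :
    ∃! f : A ≃+ A, f (b i₀) = b i₀ + a ∧ ∀ j : I, j ≠ i₀ → f (b j) = b j := by
  set Q := ⨆ j ∈ ({i₀}ᶜ : Set I), AddSubgroup.zmultiples (b j)
  have hcompl : IsCompl (ℤ ∙ b i₀) Q.toIntSubmodule := by
    rw [← AddSubgroup.toIntSubmodule_zmultiples]
    exact AddSubgroup.toIntSubmodule.isCompl_iff.1 (hindep.isCompl_biSup_compl hgen i₀)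
  obtain ⟨f, hfb, hfQ⟩ := exists_linearEquiv_apply_eq_add_of_isCompl hcompl ha
    (torsionOf_le_torsionOf_of_addOrderOf_dvd hdvd)
  have hfj : ∀ j, j ≠ i₀ → f (b j) = b j := fun j hj =>
    hfQ _ (le_biSup (fun j => AddSubgroup.zmultiples (b j)) hj (AddSubgroup.mem_zmultiples _))
  refine ⟨f.toAddEquiv, ⟨hfb, hfj⟩, fun g ⟨hgb, hgj⟩ => ?_⟩
  refine AddEquiv.toAddMonoidHom_injective
    (AddMonoidHom.ext_of_iSup_zmultiples_eq_top hgen fun i => ?_)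
  by_cases hi : i = i₀
  · subst hi
    exact hgb.trans hfb.symm
  · exact (hgj i hi).trans (hfj i hi).symm

theorem stmt_18 {A : Type*} [AddCommGroup A] {I : Type*} (b : I → A)
    (hgen : (⨆ i, AddSubgroup.zmultiples (b i)) = (⊤ : AddSubgroup A))
    (hindep : iSupIndep fun i => AddSubgroup.zmultiples (b i))
    (i₀ : I) (a : A)
    (ha : a ∈ ⨆ j ∈ ({i₀}ᶜ : Set I), AddSubgroup.zmultiples (b j))
    (hfin : 0 < addOrderOf (b i₀))
    (hdvd : addOrderOf a ∣ addOrderOf (b i₀)) :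
    ∃! f : A ≃+ A, f (b i₀) = b i₀ + a ∧ ∀ j : I, j ≠ i₀ → f (b j) = b j :=
  stmt_18_general b hgen hindep i₀ a ha hdvd
end
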